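/- arXiv:2208.04387 — 2 statements merged into one kernel-verified Lean document; each statement's English description precedes it below -/
import Mathlib

section
/- A weight w belongs to A₁^{ρ,θ} (i.e., for every cube Q = Q(x,r), (1/|Q|)∫_Q w ≤ C(1 + r/ρ(x))^θ · ess inf_Q w for some constant C) if and only if there is a constant C > 0 such that M^{ρ,θ}w(x) ≤ C w(x) for almost every x, where M^{ρ,θ}w(x) = sup over cubes Q(x₀,r₀) containing x of (1 + r₀/ρ(x₀))^{−θ} (1/|Q|)∫_Q w. -/
open MeasureTheory

noncomputable section

/-- The axis-parallel cube centered at `x` with "radius" `r = √d · ℓ(Q)/2`,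
i.e. side length `2r/√d`. -/
def cube (d : ℕ) (x : EuclideanSpace ℝ (Fin d)) (r : ℝ) :
    Set (EuclideanSpace ℝ (Fin d)) :=
  {y | ∀ i, |y i - x i| ≤ r / Real.sqrt d}

/-- Average `(1/|Q|) ∫_Q w` over the cube `Q(x,r)`. -/
def cubeAvg {d : ℕ} (x : EuclideanSpace ℝ (Fin d)) (r : ℝ)
    (w : EuclideanSpace ℝ (Fin d) → ℝ) : ℝ :=
  (volume (cube d x r)).toReal⁻¹ * ∫ y in cube d x r, w y

/-- Weighted average `(1/u(Q)) ∫_Q v·u` over the cube `Q(x,r)`. -/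
def cubeAvgW {d : ℕ} (x : EuclideanSpace ℝ (Fin d)) (r : ℝ)
    (u v : EuclideanSpace ℝ (Fin d) → ℝ) : ℝ :=
  (∫ y in cube d x r, u y)⁻¹ * ∫ y in cube d x r, v y * u y

/-- Essential infimum of `w` over the cube `Q(x,r)`. -/
def cubeInf {d : ℕ} (x : EuclideanSpace ℝ (Fin d)) (r : ℝ)
    (w : EuclideanSpace ℝ (Fin d) → ℝ) : ℝ :=
  essInf w (volume.restrict (cube d x r))

/-- Essential supremum of `w` over the cube `Q(x,r)`. -/
def cubeSup {d : ℕ} (x : EuclideanSpace ℝ (Fin d)) (r : ℝ)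
    (w : EuclideanSpace ℝ (Fin d) → ℝ) : ℝ :=
  essSup w (volume.restrict (cube d x r))

/-- `ρ` is a critical radius function with constants `C₀ > 0` and `N₀ ≥ 1`:
`C₀⁻¹ ρ(x)(1+|x−y|/ρ(x))^{−N₀} ≤ ρ(y) ≤ C₀ ρ(x)(1+|x−y|/ρ(x))^{N₀/(N₀+1)}`. -/
def IsCRF {d : ℕ} (ρ : EuclideanSpace ℝ (Fin d) → ℝ) (C₀ N₀ : ℝ) : Prop :=
  (∀ x, 0 < ρ x) ∧
    ∀ x y, C₀⁻¹ * ρ x * (1 + dist x y / ρ x) ^ (-N₀) ≤ ρ y ∧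
      ρ y ≤ C₀ * ρ x * (1 + dist x y / ρ x) ^ (N₀ / (N₀ + 1))

/-- A weight: a locally integrable function which is positive a.e. -/
def IsWeight {d : ℕ} (w : EuclideanSpace ℝ (Fin d) → ℝ) : Prop :=
  LocallyIntegrable w volume ∧ ∀ᵐ x ∂(volume : Measure (EuclideanSpace ℝ (Fin d))), 0 < w x

/-- The class `A₁^{ρ,θ}` with explicit constant `C`. -/
def A1C {d : ℕ} (ρ : EuclideanSpace ℝ (Fin d) → ℝ) (θ C : ℝ)
    (w : EuclideanSpace ℝ (Fin d) → ℝ) : Prop :=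
  ∀ x r, 0 < r → cubeAvg x r w ≤ C * (1 + r / ρ x) ^ θ * cubeInf x r w

/-- The class `A₁^{ρ,θ}`. -/
def memA1 {d : ℕ} (ρ : EuclideanSpace ℝ (Fin d) → ℝ) (θ : ℝ)
    (w : EuclideanSpace ℝ (Fin d) → ℝ) : Prop :=
  ∃ C > 0, A1C ρ θ C w

/-- The class `A₁^ρ = ∪_{θ ≥ 0} A₁^{ρ,θ}`. -/
def A1 {d : ℕ} (ρ : EuclideanSpace ℝ (Fin d) → ℝ)
    (w : EuclideanSpace ℝ (Fin d) → ℝ) : Prop :=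
  ∃ θ ≥ 0, memA1 ρ θ w

/-- The class `A_p^{ρ,θ}` (for `1 < p < ∞`) with explicit constant `C`;
here `p' = p/(p-1)`. -/
def ApC {d : ℕ} (ρ : EuclideanSpace ℝ (Fin d) → ℝ) (p θ C : ℝ)
    (w : EuclideanSpace ℝ (Fin d) → ℝ) : Prop :=
  ∀ x r, 0 < r →
    (cubeAvg x r w) ^ (1 / p) *
      (cubeAvg x r fun y => w y ^ (1 - p / (p - 1))) ^ (1 - 1 / p) ≤
        C * (1 + r / ρ x) ^ θ

/-- The class `A_p^{ρ,θ}` for `1 < p < ∞`. -/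
def memAp {d : ℕ} (ρ : EuclideanSpace ℝ (Fin d) → ℝ) (p θ : ℝ)
    (w : EuclideanSpace ℝ (Fin d) → ℝ) : Prop :=
  ∃ C > 0, ApC ρ p θ C w

/-- The class `A_p^ρ = ∪_{θ ≥ 0} A_p^{ρ,θ}` for `1 < p < ∞`. -/
def Ap {d : ℕ} (ρ : EuclideanSpace ℝ (Fin d) → ℝ) (p : ℝ)
    (w : EuclideanSpace ℝ (Fin d) → ℝ) : Prop :=
  ∃ θ ≥ 0, memAp ρ p θ w

/-- The class `A_∞^ρ = ∪_{p > 1} A_p^ρ`. -/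
def Ainf {d : ℕ} (ρ : EuclideanSpace ℝ (Fin d) → ℝ)
    (w : EuclideanSpace ℝ (Fin d) → ℝ) : Prop :=
  ∃ p, 1 < p ∧ Ap ρ p w

/-- The reverse Hölder class `RH_s^{ρ,θ}` with explicit constant `C`. -/
def RHC {d : ℕ} (ρ : EuclideanSpace ℝ (Fin d) → ℝ) (s θ C : ℝ)
    (w : EuclideanSpace ℝ (Fin d) → ℝ) : Prop :=
  ∀ x r, 0 < r →
    (cubeAvg x r fun y => w y ^ s) ^ (1 / s) ≤
      C * (1 + r / ρ x) ^ θ * cubeAvg x r w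

/-- The reverse Hölder class `RH_s^{ρ,θ}`. -/
def memRH {d : ℕ} (ρ : EuclideanSpace ℝ (Fin d) → ℝ) (s θ : ℝ)
    (w : EuclideanSpace ℝ (Fin d) → ℝ) : Prop :=
  ∃ C > 0, RHC ρ s θ C w

/-- The class `RH_s^ρ = ∪_{θ ≥ 0} RH_s^{ρ,θ}`. -/
def RH {d : ℕ} (ρ : EuclideanSpace ℝ (Fin d) → ℝ) (s : ℝ)
    (w : EuclideanSpace ℝ (Fin d) → ℝ) : Prop :=
  ∃ θ ≥ 0, memRH ρ s θ w

/-- The class `RH_∞^{ρ,θ}` with explicit constant `C`. -/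
def RHinfC {d : ℕ} (ρ : EuclideanSpace ℝ (Fin d) → ℝ) (θ C : ℝ)
    (w : EuclideanSpace ℝ (Fin d) → ℝ) : Prop :=
  ∀ x r, 0 < r → cubeSup x r w ≤ C * (1 + r / ρ x) ^ θ * cubeAvg x r w

/-- The class `RH_∞^{ρ,θ}`. -/
def memRHinf {d : ℕ} (ρ : EuclideanSpace ℝ (Fin d) → ℝ) (θ : ℝ)
    (w : EuclideanSpace ℝ (Fin d) → ℝ) : Prop :=
  ∃ C > 0, RHinfC ρ θ C w

/-- The class `RH_∞^ρ = ∪_{θ ≥ 0} RH_∞^{ρ,θ}`. -/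
def RHinf {d : ℕ} (ρ : EuclideanSpace ℝ (Fin d) → ℝ)
    (w : EuclideanSpace ℝ (Fin d) → ℝ) : Prop :=
  ∃ θ ≥ 0, memRHinf ρ θ w

/-- The weighted class `A_p^{ρ,θ}(u)` (for `1 < p < ∞`) with explicit constant `C`. -/
def ApWC {d : ℕ} (ρ u : EuclideanSpace ℝ (Fin d) → ℝ) (p θ C : ℝ)
    (v : EuclideanSpace ℝ (Fin d) → ℝ) : Prop :=
  ∀ x r, 0 < r →
    (cubeAvgW x r u v) ^ (1 / p) *
      (cubeAvgW x r u fun y => v y ^ (1 - p / (p - 1))) ^ (1 - 1 / p) ≤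
        C * (1 + r / ρ x) ^ θ

/-- The weighted class `A_p^{ρ,θ}(u)` for `1 < p < ∞`. -/
def memApW {d : ℕ} (ρ u : EuclideanSpace ℝ (Fin d) → ℝ) (p θ : ℝ)
    (v : EuclideanSpace ℝ (Fin d) → ℝ) : Prop :=
  ∃ C > 0, ApWC ρ u p θ C v

/-- The weighted class `A_p^ρ(u) = ∪_{θ ≥ 0} A_p^{ρ,θ}(u)` for `1 < p < ∞`. -/
def ApW {d : ℕ} (ρ u : EuclideanSpace ℝ (Fin d) → ℝ) (p : ℝ)
    (v : EuclideanSpace ℝ (Fin d) → ℝ) : Prop :=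
  ∃ θ ≥ 0, memApW ρ u p θ v

/-- The weighted class `A₁^{ρ,θ}(u)`. -/
def memA1W {d : ℕ} (ρ u : EuclideanSpace ℝ (Fin d) → ℝ) (θ : ℝ)
    (v : EuclideanSpace ℝ (Fin d) → ℝ) : Prop :=
  ∃ C > 0, ∀ x r, 0 < r → cubeAvgW x r u v ≤ C * (1 + r / ρ x) ^ θ * cubeInf x r v

/-- The weighted class `A₁^ρ(u)`. -/
def A1W {d : ℕ} (ρ u : EuclideanSpace ℝ (Fin d) → ℝ)
    (v : EuclideanSpace ℝ (Fin d) → ℝ) : Prop :=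
  ∃ θ ≥ 0, memA1W ρ u θ v

/-- The weighted class `A_∞^ρ(u) = ∪_{p > 1} A_p^ρ(u)`. -/
def AinfW {d : ℕ} (ρ u : EuclideanSpace ℝ (Fin d) → ℝ)
    (v : EuclideanSpace ℝ (Fin d) → ℝ) : Prop :=
  ∃ p, 1 < p ∧ ApW ρ u p v

/-!
A bound `M^{ρ,θ} w ≤ C w` a.e. gives `A₁^{ρ,θ}` at once: on a cube `Q(x,r)` it says that
`C⁻¹ (1 + r/ρ(x))^{-θ} ⨍_Q w` is an a.e. lower bound for `w` on `Q`, hence for `ess inf_Q w`.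

Conversely, `ess inf_Q w ≤ w(y)` holds for a.e. `y ∈ Q`, but the exceptional set depends on `Q`,
so it is only used for the countably many cubes with centres in a dense sequence and rational
radii. Every cube `Q(x₀,r₀)` lies in such a cube `Q(c,q)` with `q ≤ 2r₀` and `|x₀ - c| ≤ ρ(x₀)`;
the lower bound of the critical radius function then gives `ρ(c) ≥ C₀⁻¹ 2^{-N₀} ρ(x₀)`, so the
`A₁` inequality on `Q(c,q)` costs only the factor `2^d (1 + 2 C₀ 2^{N₀})^θ`.
-/

section Cube

variable {d : ℕ}

theorem cube_eq_preimage_pi (x : EuclideanSpace ℝ (Fin d)) (r : ℝ) :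
    cube d x r = (MeasurableEquiv.toLp 2 (Fin d → ℝ)).symm ⁻¹'
      Set.univ.pi fun i => Set.Icc (x i - r / Real.sqrt d) (x i + r / Real.sqrt d) := by
  ext y
  simp only [cube, Set.mem_ofPred_eq, Set.mem_preimage, Set.mem_pi, Set.mem_univ, true_implies,
    Set.mem_Icc, abs_le, MeasurableEquiv.coe_toLp_symm]
  exact forall_congr' fun i => by constructor <;> rintro ⟨h₁, h₂⟩ <;> constructor <;> linarith

theorem measurableSet_cube (x : EuclideanSpace ℝ (Fin d)) (r : ℝ) :
    MeasurableSet (cube d x r) := by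
  rw [cube_eq_preimage_pi]
  exact (MeasurableEquiv.toLp 2 (Fin d → ℝ)).symm.measurable
    (MeasurableSet.univ_pi fun _ => measurableSet_Icc)

theorem isCompact_cube (x : EuclideanSpace ℝ (Fin d)) (r : ℝ) : IsCompact (cube d x r) := by
  rw [cube_eq_preimage_pi, ← MeasurableEquiv.image_eq_preimage_symm]
  exact (isCompact_univ_pi fun _ => isCompact_Icc).image (PiLp.continuous_toLp 2 _)

theorem toReal_volume_cube (x : EuclideanSpace ℝ (Fin d)) {r : ℝ} (hr : 0 ≤ r) :
    (volume (cube d x r)).toReal = (2 * (r / Real.sqrt d)) ^ d := by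
  rw [cube_eq_preimage_pi,
    (EuclideanSpace.volume_preserving_symm_measurableEquiv_toLp (Fin d)).measure_preimage
      (MeasurableSet.univ_pi fun _ => measurableSet_Icc).nullMeasurableSet,
    volume_pi_pi]
  have hside : ∀ i, x i + r / Real.sqrt d - (x i - r / Real.sqrt d) = 2 * (r / Real.sqrt d) :=
    fun i => by ring
  simp only [Real.volume_Icc, ENNReal.toReal_prod, hside,
    ENNReal.toReal_ofReal (by positivity : 0 ≤ 2 * (r / Real.sqrt d))]
  simp

theorem toReal_volume_cube_pos (x : EuclideanSpace ℝ (Fin d)) {r : ℝ} (hr : 0 < r) :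
    0 < (volume (cube d x r)).toReal := by
  rw [toReal_volume_cube x hr.le]
  rcases Nat.eq_zero_or_pos d with rfl | hd
  · simp
  · have : 0 < Real.sqrt d := Real.sqrt_pos.2 (by exact_mod_cast hd)
    positivity

theorem toReal_volume_cube_le {x c : EuclideanSpace ℝ (Fin d)} {r q k : ℝ} (hq : 0 ≤ q)
    (hr : 0 ≤ r) (hqr : q ≤ k * r) :
    (volume (cube d c q)).toReal ≤ k ^ d * (volume (cube d x r)).toReal := by
  rw [toReal_volume_cube c hq, toReal_volume_cube x hr, ← mul_pow]
  refine pow_le_pow_left₀ (by positivity) ?_ d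
  calc 2 * (q / Real.sqrt d) ≤ 2 * (k * r / Real.sqrt d) := by gcongr
    _ = k * (2 * (r / Real.sqrt d)) := by ring

theorem cube_subset_cube {x c : EuclideanSpace ℝ (Fin d)} {r q : ℝ}
    (h : r + Real.sqrt d * dist x c ≤ q) : cube d x r ⊆ cube d c q := by
  intro y hy i
  have hd : 0 < Real.sqrt d := Real.sqrt_pos.2 (by exact_mod_cast i.pos)
  calc |y i - c i| ≤ |y i - x i| + |x i - c i| := abs_sub_le _ _ _
    _ ≤ r / Real.sqrt d + dist x c := add_le_add (hy i) (PiLp.dist_apply_le x c i)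
    _ = (r + Real.sqrt d * dist x c) / Real.sqrt d := by field_simp
    _ ≤ q / Real.sqrt d := by gcongr

theorem exists_rat_cube_superset {D : ℕ → EuclideanSpace ℝ (Fin d)} (hD : DenseRange D)
    (x₀ : EuclideanSpace ℝ (Fin d)) {r₀ ε : ℝ} (hr₀ : 0 < r₀) (hε : 0 < ε) :
    ∃ (n : ℕ) (q : ℚ), 0 < (q : ℝ) ∧ (q : ℝ) ≤ 2 * r₀ ∧ dist x₀ (D n) < ε ∧
      cube d x₀ r₀ ⊆ cube d (D n) q := by
  obtain ⟨n, hn⟩ := hD.exists_dist_lt x₀ (lt_min hε (by positivity : 0 < r₀ / (Real.sqrt d + 1)))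
  rw [lt_min_iff] at hn
  have hshift : Real.sqrt d * dist x₀ (D n) < r₀ := by
    calc Real.sqrt d * dist x₀ (D n) ≤ Real.sqrt d * (r₀ / (Real.sqrt d + 1)) := by
          gcongr; exact hn.2.le
      _ < r₀ := by rw [mul_div_assoc', div_lt_iff₀ (by positivity)]; nlinarith
  obtain ⟨q, hq₁, hq₂⟩ := exists_rat_btwn (by linarith : r₀ + Real.sqrt d * dist x₀ (D n) < 2 * r₀)
  exact ⟨n, q, lt_of_le_of_lt (by positivity) hq₁, hq₂.le, hn.1, cube_subset_cube hq₁.le⟩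

end Cube

section EssInf

variable {α : Type*} [MeasurableSpace α] {μ : Measure α}

theorem isCoboundedUnder_ge_ae_real (hμ : μ ≠ 0) (f : α → ℝ) :
    Filter.IsCoboundedUnder (· ≥ ·) (ae μ) f := by
  have := ae_neBot.2 hμ
  obtain ⟨n, hn⟩ : ∃ n : ℕ, ∃ᵐ x ∂μ, f x < n := by
    by_contra! h
    obtain ⟨x, hx⟩ := (ae_all_iff.2 h).exists
    obtain ⟨n, hn⟩ := exists_nat_gt (f x)
    exact (hn.trans_le (hx n)).false
  refine ⟨n, fun a ha => ?_⟩
  obtain ⟨x, hax, hxn⟩ := ((Filter.eventually_map.1 ha).and_frequently hn).exists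
  exact hax.trans hxn.le

theorem ae_forall_essInf_restrict_le {ι : Type*} [Countable ι] {s : ι → Set α}
    (hs : ∀ i, MeasurableSet (s i)) {f : α → ℝ}
    (hf : Filter.IsBoundedUnder (· ≥ ·) (ae μ) f) :
    ∀ᵐ x ∂μ, ∀ i, x ∈ s i → essInf f (μ.restrict (s i)) ≤ f x := by
  refine ae_all_iff.2 fun i => ?_
  rw [← ae_restrict_iff' (hs i)]
  exact ae_essInf_le (hf.mono (ae_mono Measure.restrict_le_self))

end EssInf

theorem inv_toReal_mul_setIntegral_le {α : Type*} [MeasurableSpace α] {μ : Measure α}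
    {s t : Set α} {f : α → ℝ} {K : ℝ} (hst : s ⊆ t) (hf : IntegrableOn f t μ)
    (hf₀ : 0 ≤ᵐ[μ.restrict t] f) (hs : 0 < (μ s).toReal) (ht : 0 < (μ t).toReal)
    (hμ : (μ t).toReal ≤ K * (μ s).toReal) :
    (μ s).toReal⁻¹ * ∫ x in s, f x ∂μ ≤ K * ((μ t).toReal⁻¹ * ∫ x in t, f x ∂μ) := by
  have hint : ∫ x in s, f x ∂μ ≤ ∫ x in t, f x ∂μ := setIntegral_mono_set hf hf₀ hst.eventuallyLE
  have hinv : (μ s).toReal⁻¹ ≤ K * (μ t).toReal⁻¹ := by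
    rw [← div_eq_mul_inv, le_div_iff₀ ht, inv_mul_le_iff₀ hs]
    linarith
  calc (μ s).toReal⁻¹ * ∫ x in s, f x ∂μ ≤ (μ s).toReal⁻¹ * ∫ x in t, f x ∂μ := by gcongr
    _ ≤ K * (μ t).toReal⁻¹ * ∫ x in t, f x ∂μ :=
        mul_le_mul_of_nonneg_right hinv (integral_nonneg_of_ae hf₀)
    _ = K * ((μ t).toReal⁻¹ * ∫ x in t, f x ∂μ) := mul_assoc _ _ _

theorem IsCRF.mul_le_of_dist_le {d : ℕ} {ρ : EuclideanSpace ℝ (Fin d) → ℝ} {C₀ N₀ : ℝ}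
    (hρ : IsCRF ρ C₀ N₀) (hC₀ : 0 ≤ C₀) (hN₀ : 0 ≤ N₀) {x c : EuclideanSpace ℝ (Fin d)}
    (hxc : dist x c ≤ ρ x) : C₀⁻¹ * 2 ^ (-N₀) * ρ x ≤ ρ c := by
  have hρx := hρ.1 x
  have hbase : 1 + dist x c / ρ x ≤ 2 := by
    linarith [(div_le_one hρx).2 hxc]
  calc C₀⁻¹ * 2 ^ (-N₀) * ρ x = C₀⁻¹ * ρ x * 2 ^ (-N₀) := by ring
    _ ≤ C₀⁻¹ * ρ x * (1 + dist x c / ρ x) ^ (-N₀) :=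
        mul_le_mul_of_nonneg_left
          (Real.rpow_le_rpow_of_nonpos (by positivity) hbase (neg_nonpos.2 hN₀)) (by positivity)
    _ ≤ ρ c := (hρ.2 x c).1

theorem one_add_div_rpow_le {a ρ₀ ρ₁ r q θ : ℝ} (ha : 0 < a) (hρ₀ : 0 < ρ₀) (hr : 0 ≤ r)
    (hθ : 0 ≤ θ) (hq₀ : 0 ≤ q) (hq : q ≤ 2 * r) (hρ : a * ρ₀ ≤ ρ₁) :
    (1 + q / ρ₁) ^ θ ≤ (1 + 2 / a) ^ θ * (1 + r / ρ₀) ^ θ := by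
  have hρ₁ : 0 < ρ₁ := (mul_pos ha hρ₀).trans_le hρ
  have hle : 1 + q / ρ₁ ≤ (1 + 2 / a) * (1 + r / ρ₀) := by
    have hq' : q / ρ₁ ≤ 2 * r / (a * ρ₀) := div_le_div₀ (by positivity) hq (by positivity) hρ
    have hexpand : (1 + 2 / a) * (1 + r / ρ₀) = 1 + 2 / a + r / ρ₀ + 2 * r / (a * ρ₀) := by
      field_simp
      ring
    rw [hexpand]
    linarith [show 0 ≤ 2 / a by positivity, show 0 ≤ r / ρ₀ by positivity]
  rw [← Real.mul_rpow (by positivity) (by positivity)]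
  exact Real.rpow_le_rpow (by positivity) hle hθ

/-- `M^{ρ,θ} w ≤ C w` a.e., with the supremum defining `M^{ρ,θ} w(x)` unfolded. -/
def MaximalBound {d : ℕ} (ρ : EuclideanSpace ℝ (Fin d) → ℝ) (θ C : ℝ)
    (w : EuclideanSpace ℝ (Fin d) → ℝ) : Prop :=
  ∀ᵐ x ∂(volume : Measure (EuclideanSpace ℝ (Fin d))),
    ∀ (x₀ : EuclideanSpace ℝ (Fin d)) (r₀ : ℝ), 0 < r₀ → x ∈ cube d x₀ r₀ →
      (1 + r₀ / ρ x₀) ^ (-θ) * cubeAvg x₀ r₀ w ≤ C * w x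

section A1

variable {d : ℕ} {ρ w : EuclideanSpace ℝ (Fin d) → ℝ} {θ C : ℝ}

theorem A1C.rpow_neg_mul_cubeAvg_le (hA : A1C ρ θ C w) (hC : 0 ≤ C) (hθ : 0 ≤ θ)
    (hw : IsWeight w) {a : ℝ} (ha : 0 < a) {x₀ c x : EuclideanSpace ℝ (Fin d)} {r₀ q : ℝ}
    (hρ₀ : 0 < ρ x₀) (hr₀ : 0 < r₀) (hq : 0 < q) (hq₂ : q ≤ 2 * r₀)
    (hsub : cube d x₀ r₀ ⊆ cube d c q) (hρc : a * ρ x₀ ≤ ρ c) (hwx : 0 ≤ w x)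
    (hinf : cubeInf c q w ≤ w x) :
    (1 + r₀ / ρ x₀) ^ (-θ) * cubeAvg x₀ r₀ w ≤ C * 2 ^ d * (1 + 2 / a) ^ θ * w x := by
  have hρc' : 0 < ρ c := (mul_pos ha hρ₀).trans_le hρc
  have havg : cubeAvg x₀ r₀ w ≤ 2 ^ d * cubeAvg c q w :=
    inv_toReal_mul_setIntegral_le hsub (hw.1.integrableOn_isCompact (isCompact_cube c q))
      (ae_restrict_of_ae (hw.2.mono fun _ h => h.le)) (toReal_volume_cube_pos x₀ hr₀)
      (toReal_volume_cube_pos c hq) (toReal_volume_cube_le hq.le hr₀.le hq₂)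
  have hfac := one_add_div_rpow_le ha hρ₀ hr₀.le hθ hq.le hq₂ hρc
  have hbase : 0 < 1 + r₀ / ρ x₀ := by positivity
  rw [Real.rpow_neg hbase.le, inv_mul_le_iff₀ (Real.rpow_pos_of_pos hbase θ)]
  calc cubeAvg x₀ r₀ w ≤ 2 ^ d * (C * (1 + q / ρ c) ^ θ * cubeInf c q w) := by
        refine havg.trans ?_
        gcongr
        exact hA c q hq
    _ ≤ 2 ^ d * (C * (1 + q / ρ c) ^ θ * w x) := by gcongr
    _ ≤ 2 ^ d * (C * ((1 + 2 / a) ^ θ * (1 + r₀ / ρ x₀) ^ θ) * w x) := by gcongr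
    _ = (1 + r₀ / ρ x₀) ^ θ * (C * 2 ^ d * (1 + 2 / a) ^ θ * w x) := by ring

theorem A1C.exists_maximalBound {C₀ N₀ : ℝ} (hρ : IsCRF ρ C₀ N₀) (hC₀ : 0 < C₀)
    (hN₀ : 0 ≤ N₀) (hθ : 0 ≤ θ) (hw : IsWeight w) (hA : A1C ρ θ C w) (hC : 0 < C) :
    ∃ C' > 0, MaximalBound ρ θ C' w := by
  set a := C₀⁻¹ * 2 ^ (-N₀)
  have ha : 0 < a := by positivity
  obtain ⟨D, hD⟩ : ∃ D : ℕ → EuclideanSpace ℝ (Fin d), DenseRange D :=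
    ⟨_, TopologicalSpace.denseRange_denseSeq _⟩
  have hinf := ae_forall_essInf_restrict_le (s := fun p : ℕ × ℚ => cube d (D p.1) p.2)
    (fun _ => measurableSet_cube _ _) ⟨0, hw.2.mono fun _ h => h.le⟩
  refine ⟨C * 2 ^ d * (1 + 2 / a) ^ θ, by positivity, ?_⟩
  filter_upwards [hw.2, hinf] with x hwx hinf x₀ r₀ hr₀ hx
  obtain ⟨n, q, hq, hq₂, hdist, hsub⟩ := exists_rat_cube_superset hD x₀ hr₀ (hρ.1 x₀)
  exact hA.rpow_neg_mul_cubeAvg_le hC.le hθ hw ha (hρ.1 x₀) hr₀ hq hq₂ hsub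
    (hρ.mul_le_of_dist_le hC₀.le hN₀ hdist.le) hwx.le (hinf (n, q) (hsub hx))

theorem MaximalBound.a1C (h : MaximalBound ρ θ C w) (hC : 0 < C) (hρ : ∀ x, 0 < ρ x) :
    A1C ρ θ C w := by
  intro x r hr
  have hbase : 0 < 1 + r / ρ x := by have := hρ x; positivity
  have hμ : volume.restrict (cube d x r) ≠ 0 := by
    rw [Ne, Measure.restrict_eq_zero]
    exact (ENNReal.toReal_pos_iff.1 (toReal_volume_cube_pos x hr)).1.ne'
  have hlow : C⁻¹ * ((1 + r / ρ x) ^ (-θ) * cubeAvg x r w) ≤ cubeInf x r w := by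
    refine le_essInf_of_ae_le _ ?_ (isCoboundedUnder_ge_ae_real hμ w)
    filter_upwards [ae_restrict_of_ae h, ae_restrict_mem (measurableSet_cube x r)]
      with y hy hmem
    exact (inv_mul_le_iff₀ hC).2 (hy x r hr hmem)
  calc cubeAvg x r w
      = C * (1 + r / ρ x) ^ θ * (C⁻¹ * ((1 + r / ρ x) ^ (-θ) * cubeAvg x r w)) := by
        rw [Real.rpow_neg hbase.le]
        field_simp
    _ ≤ C * (1 + r / ρ x) ^ θ * cubeInf x r w := by gcongr

end A1

/-- `w ∈ A₁^{ρ,θ}` iff `M^{ρ,θ}w ≤ C w` a.e., i.e. iff there is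
`C > 0` such that for a.e. `x`, every cube `Q(x₀,r₀)` containing `x` satisfies
`(1 + r₀/ρ(x₀))^{−θ} (1/|Q|)∫_Q w ≤ C w(x)`. -/
theorem A1_iff_maximal_bound {d : ℕ} (ρ : EuclideanSpace ℝ (Fin d) → ℝ)
    (C₀ N₀ : ℝ) (hC₀ : 0 < C₀) (hN₀ : 1 ≤ N₀) (hρ : IsCRF ρ C₀ N₀)
    (θ : ℝ) (hθ : 0 ≤ θ) (w : EuclideanSpace ℝ (Fin d) → ℝ) (hw : IsWeight w) :
    memA1 ρ θ w ↔
      ∃ C > 0, ∀ᵐ x ∂(volume : Measure (EuclideanSpace ℝ (Fin d))),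
        ∀ (x₀ : EuclideanSpace ℝ (Fin d)) (r₀ : ℝ), 0 < r₀ → x ∈ cube d x₀ r₀ →
          (1 + r₀ / ρ x₀) ^ (-θ) * cubeAvg x₀ r₀ w ≤ C * w x := by
  constructor
  · rintro ⟨C, hC, hA⟩
    exact hA.exists_maximalBound hρ hC₀ (by linarith) hθ hw hC
  · rintro ⟨C, hC, hM⟩
    exact ⟨C, hC, MaximalBound.a1C hM hC hρ.1⟩

end
end

section
/- Let R be a cube in ℝ^d, let v be a doubling weight, and let f ∈ L¹(R, v dx). Then for every t > (1/v(R))∫_R |f| v there exist a function g, functions h_i, and a collection {P_i} of pairwise disjoint dyadic subcubes of R such that: f = g + Σ_i h_i; |g(x)| ≤ C t for almost every x ∈ R with C depending only on d and the doubling constant; each h_i is supported on P_i and satisfies ∫_{P_i} h_i v = 0; moreover t ≤ (1/v(P_i))∫_{P_i} |f| v ≤ γt for a constant γ = γ(d, v) > 1, and |f(x)| ≤ t for a.e. x ∈ R \ ∪_i P_i. -/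
open MeasureTheory

noncomputable section

/-- Half-open axis-parallel box with lower corner `a` and side length `L`. -/
def box {d : ℕ} (a : EuclideanSpace ℝ (Fin d)) (L : ℝ) :
    Set (EuclideanSpace ℝ (Fin d)) :=
  {y | ∀ i, a i ≤ y i ∧ y i < a i + L}

/-- A dyadic subcube of the box with corner `a` and side `L`, obtained by `k`
successive bisections of the sides. -/
def IsDyadicSubcube {d : ℕ} (a : EuclideanSpace ℝ (Fin d)) (L : ℝ)
    (P : Set (EuclideanSpace ℝ (Fin d))) : Prop :=
  ∃ (k : ℕ) (m : Fin d → ℕ), (∀ i, m i < 2 ^ k) ∧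
    P = box (WithLp.toLp 2 fun i => a i + (m i : ℝ) * (L / 2 ^ k)) (L / 2 ^ k)

/-- `v` is doubling with constant `Cv`: `v(2Q) ≤ Cv · v(Q)` for all cubes `Q`. -/
def IsDoubling {d : ℕ} (v : EuclideanSpace ℝ (Fin d) → ℝ) (Cv : ℝ) : Prop :=
  ∀ (x : EuclideanSpace ℝ (Fin d)) (r : ℝ), 0 < r →
    (∫ y in cube d x (2 * r), v y) ≤ Cv * ∫ y in cube d x r, v y

/-!
Stop the dyadic subdivision of `R` at the maximal cubes `P i` on which the `v`-average of `|f|`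
exceeds `t`. As the average over `R` is below `t`, each `P i` is a proper subcube whose parent
has average at most `t`; doubling gives `v(parent) ≤ Cv² v(P i)`, so every `P i` has average in
`(t, Cv² t]`. Off `⋃ P i` every dyadic cube around `x` has average at most `t`, and since `v dx`
is doubling these averages tend to `|f x|` for almost every `x` (Lebesgue differentiation along
a Vitali family of closed cubes). Put `g = f` off the cubes and `g =` the `v`-average of `f` on
each `P i`, and `h i = (f - g) 1_{P i}`.
-/

open Metric Set Filter Topology Function
open scoped ENNReal NNReal

namespace CalderonZygmund

section WeightedAverage

variable {α : Type*} [MeasurableSpace α] {μ : Measure α} {v f : α → ℝ} {s A B : Set α}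

def wavg (μ : Measure α) (v f : α → ℝ) (s : Set α) : ℝ :=
  (∫ y in s, v y ∂μ)⁻¹ * ∫ y in s, f y * v y ∂μ

lemma setIntegral_mul_eq_mul_wavg (hs : ∫ y in s, v y ∂μ ≠ 0) :
    ∫ y in s, f y * v y ∂μ = (∫ y in s, v y ∂μ) * wavg μ v f s := by
  rw [wavg, mul_inv_cancel_left₀ hs]

lemma wavg_nonneg (hv : 0 ≤ᵐ[μ.restrict s] v) (hf : 0 ≤ᵐ[μ.restrict s] f) :
    0 ≤ wavg μ v f s :=
  mul_nonneg (inv_nonneg.2 (integral_nonneg_of_ae hv))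
    (integral_nonneg_of_ae (by filter_upwards [hv, hf] with y hvy hfy using mul_nonneg hfy hvy))

lemma abs_wavg_le_wavg_abs (hv : 0 ≤ᵐ[μ.restrict s] v) :
    |wavg μ v f s| ≤ wavg μ v (fun y => |f y|) s := by
  rw [wavg, wavg, abs_mul, abs_inv, abs_of_nonneg (integral_nonneg_of_ae hv)]
  refine mul_le_mul_of_nonneg_left ((abs_integral_le_integral_abs).trans_eq ?_)
    (inv_nonneg.2 (integral_nonneg_of_ae hv))
  refine integral_congr_ae ?_
  filter_upwards [hv] with y hy
  rw [abs_mul, abs_of_nonneg hy]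

lemma wavg_le_mul_wavg_of_subset {K : ℝ} (hAB : A ⊆ B)
    (hfv : IntegrableOn (fun y => f y * v y) B μ) (hv : 0 ≤ᵐ[μ.restrict B] v)
    (hf : 0 ≤ᵐ[μ.restrict B] f) (hA : 0 < ∫ y in A, v y ∂μ) (hB : ∫ y in B, v y ∂μ ≠ 0)
    (hK : ∫ y in B, v y ∂μ ≤ K * ∫ y in A, v y ∂μ) :
    wavg μ v f A ≤ K * wavg μ v f B := by
  have hfvB : 0 ≤ᵐ[μ.restrict B] fun y => f y * v y := by
    filter_upwards [hv, hf] with y hvy hfy using mul_nonneg hfy hvy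
  have hmono : ∫ y in A, f y * v y ∂μ ≤ ∫ y in B, f y * v y ∂μ :=
    setIntegral_mono_set hfv hfvB hAB.eventuallyLE
  rw [wavg, inv_mul_le_iff₀ hA]
  calc ∫ y in A, f y * v y ∂μ ≤ (∫ y in B, v y ∂μ) * wavg μ v f B :=
        hmono.trans_eq (setIntegral_mul_eq_mul_wavg hB)
    _ ≤ (K * ∫ y in A, v y ∂μ) * wavg μ v f B :=
        mul_le_mul_of_nonneg_right hK (wavg_nonneg hv hf)
    _ = (∫ y in A, v y ∂μ) * (K * wavg μ v f B) := by ring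

lemma setIntegral_sub_wavg_mul (hfv : IntegrableOn (fun y => f y * v y) s μ)
    (hvs : IntegrableOn v s μ) (hs : ∫ y in s, v y ∂μ ≠ 0) :
    ∫ y in s, (f y - wavg μ v f s) * v y ∂μ = 0 := by
  simp_rw [sub_mul]
  rw [integral_sub hfv (hvs.const_mul _), integral_const_mul,
    setIntegral_mul_eq_mul_wavg hs, mul_comm, sub_self]

lemma wavg_univ_of_subsingleton [Subsingleton α] (hv : ∫ y, v y ∂μ ≠ 0) (y : α) :
    wavg μ v f univ = f y := by
  have hconst : ∀ z, f z * v z = f y * v z := fun z => by rw [Subsingleton.elim z y]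
  simp only [wavg, Measure.restrict_univ, hconst, integral_const_mul]
  field_simp

end WeightedAverage

section Decomposition

variable {α ι : Type*} {P : ι → Set α}

lemma tsum_indicator_of_mem (hP : Pairwise (Disjoint on P)) (F : ι → α → ℝ) {i : ι} {y : α}
    (hy : y ∈ P i) : ∑' j, (P j).indicator (F j) y = F i y := by
  rw [tsum_eq_single i fun j hj => indicator_of_notMem
    (fun hyj => disjoint_left.1 (hP hj) hyj hy) _, indicator_of_mem hy]

lemma tsum_indicator_of_notMem_iUnion (F : ι → α → ℝ) {y : α} (hy : y ∉ ⋃ i, P i) :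
    ∑' j, (P j).indicator (F j) y = 0 := by
  simp_all

variable [MeasurableSpace α] {μ : Measure α} {v f : α → ℝ}

theorem exists_good_bad_decomposition [Countable ι] {S : Set α} {M : ℝ}
    (hS : MeasurableSet S) (hPm : ∀ i, MeasurableSet (P i)) (hP : Pairwise (Disjoint on P))
    (hv : ∀ᵐ y ∂μ, 0 ≤ v y) (hvP : ∀ i, ∫ y in P i, v y ∂μ ≠ 0)
    (hvi : ∀ i, IntegrableOn v (P i) μ) (hfv : ∀ i, IntegrableOn (fun y => f y * v y) (P i) μ)
    (havg : ∀ i, wavg μ v (fun y => |f y|) (P i) ≤ M)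
    (hgood : ∀ᵐ y ∂μ.restrict (S \ ⋃ i, P i), |f y| ≤ M) :
    ∃ (g : α → ℝ) (h : ι → α → ℝ), (∀ y, f y = g y + ∑' i, h i y) ∧
      (∀ᵐ y ∂μ.restrict S, |g y| ≤ M) ∧ (∀ i y, y ∉ P i → h i y = 0) ∧
      ∀ i, ∫ y in P i, h i y * v y ∂μ = 0 := by
  set h : ι → α → ℝ := fun i => (P i).indicator fun y => f y - wavg μ v f (P i)
  refine ⟨fun y => f y - ∑' i, h i y, h, fun y => by ring, ?_,
    fun i y hy => indicator_of_notMem hy _, fun i => ?_⟩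
  · rw [ae_restrict_iff' (hS.diff (.iUnion hPm))] at hgood
    rw [ae_restrict_iff' hS]
    filter_upwards [hgood] with y hy hyS
    by_cases hyP : ∃ i, y ∈ P i
    · obtain ⟨i, hyi⟩ := hyP
      rw [tsum_indicator_of_mem hP _ hyi, sub_sub_cancel]
      exact (abs_wavg_le_wavg_abs (ae_restrict_of_ae hv)).trans (havg i)
    · rw [← mem_iUnion] at hyP
      rw [tsum_indicator_of_notMem_iUnion _ hyP, sub_zero]
      exact hy ⟨hyS, hyP⟩
  · rw [← setIntegral_sub_wavg_mul (hfv i) (hvi i) (hvP i)]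
    exact setIntegral_congr_fun (hPm i) fun y hy => by simp only [h, indicator_of_mem hy]

end Decomposition

section WithDensity

variable {α : Type*} [MeasurableSpace α] {μ : Measure α} {v : α → ℝ} {s : Set α}

lemma withDensity_ofReal_apply (hs : MeasurableSet s) (hvs : IntegrableOn v s μ)
    (hv : 0 ≤ᵐ[μ.restrict s] v) :
    μ.withDensity (fun y => ENNReal.ofReal (v y)) s = ENNReal.ofReal (∫ y in s, v y ∂μ) := by
  rw [withDensity_apply _ hs, ofReal_integral_eq_lintegral_ofReal hvs hv]

lemma setIntegral_withDensity_ofReal (hv : AEMeasurable v μ) (hnn : 0 ≤ᵐ[μ] v)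
    (hs : MeasurableSet s) (F : α → ℝ) :
    ∫ y in s, F y ∂μ.withDensity (fun y => ENNReal.ofReal (v y)) = ∫ y in s, F y * v y ∂μ := by
  rw [setIntegral_withDensity_eq_setIntegral_toReal_smul₀ hv.ennreal_ofReal.restrict
    (ae_of_all _ fun _ => ENNReal.ofReal_lt_top) F hs]
  refine setIntegral_congr_ae hs ?_
  filter_upwards [hnn] with y hy _
  rw [ENNReal.toReal_ofReal hy, smul_eq_mul, mul_comm]

lemma setAverage_withDensity_ofReal (hv : AEMeasurable v μ) (hnn : 0 ≤ᵐ[μ] v)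
    (hs : MeasurableSet s) (hvs : IntegrableOn v s μ) (F : α → ℝ) :
    ⨍ y in s, F y ∂μ.withDensity (fun y => ENNReal.ofReal (v y)) = wavg μ v F s := by
  rw [setAverage_eq, measureReal_def, withDensity_ofReal_apply hs hvs (ae_restrict_of_ae hnn),
    ENNReal.toReal_ofReal (integral_nonneg_of_ae (ae_restrict_of_ae hnn)),
    setIntegral_withDensity_ofReal hv hnn hs, smul_eq_mul, wavg]

lemma integrableOn_withDensity_ofReal_iff (hv : AEMeasurable v μ) (hnn : 0 ≤ᵐ[μ] v)
    (hs : MeasurableSet s) {F : α → ℝ} :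
    IntegrableOn F s (μ.withDensity fun y => ENNReal.ofReal (v y)) ↔
      IntegrableOn (fun y => F y * v y) s μ := by
  rw [IntegrableOn, restrict_withDensity hs, integrable_withDensity_iff_integrable_smul₀'
    hv.ennreal_ofReal.restrict (ae_of_all _ fun _ => ENNReal.ofReal_lt_top)]
  refine integrable_congr ?_
  filter_upwards [ae_restrict_of_ae hnn] with y hy
  rw [ENNReal.toReal_ofReal hy, smul_eq_mul, mul_comm]

lemma isLocallyFiniteMeasure_withDensity_ofReal [TopologicalSpace α] [SFinite μ]
    (hv : LocallyIntegrable v μ) :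
    IsLocallyFiniteMeasure (μ.withDensity fun y => ENNReal.ofReal (v y)) := by
  refine ⟨fun x => ?_⟩
  obtain ⟨U, hU, hvU⟩ := hv x
  exact ⟨U, hU, by rw [withDensity_apply' _ U]; exact hvU.lintegral_lt_top⟩

end WithDensity

theorem ae_tendsto_setAverage_of_doubling {α E : Type*} [PseudoMetricSpace α]
    [MeasurableSpace α] [BorelSpace α] [SecondCountableTopology α]
    [NormedAddCommGroup E] [NormedSpace ℝ E] [CompleteSpace E]
    (μ : Measure α) [IsLocallyFiniteMeasure μ] (C : ℝ≥0)
    (hμ : ∀ x, ∀ r > 0, μ (closedBall x (3 * r)) ≤ C * μ (closedBall x r))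
    {f : α → E} (hf : LocallyIntegrable f μ) :
    ∀ᵐ x ∂μ, ∀ A : ℕ → Set α,
      (∀ k, IsClosed (A k) ∧ (interior (A k)).Nonempty ∧
        ∃ r, A k ⊆ closedBall x r ∧ μ (closedBall x (3 * r)) ≤ C * μ (A k)) →
      (∀ ε > 0, ∀ᶠ k in atTop, A k ⊆ closedBall x ε) →
      Tendsto (fun k => ⨍ y in A k, f y ∂μ) atTop (𝓝 (f x)) := by
  let V := Vitali.vitaliFamily μ C fun x =>
    Eventually.frequently (eventually_nhdsWithin_of_forall fun r (hr : 0 < r) => hμ x r hr)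
  filter_upwards [V.ae_tendsto_average hf] with x hx A hA hshrink
  exact hx.comp (V.tendsto_filterAt_iff.2 ⟨.of_forall hA, hshrink⟩)

section Cubes

variable {d : ℕ}

lemma abs_apply_sub_le_dist (x y : EuclideanSpace ℝ (Fin d)) (i : Fin d) :
    |x i - y i| ≤ dist x y := by
  simpa [Real.dist_eq] using PiLp.dist_apply_le x y i

lemma sqrt_natCast_le_two_pow (d : ℕ) : √(d : ℝ) ≤ 2 ^ d := by
  rw [Real.sqrt_le_left (by positivity), ← pow_mul]
  exact_mod_cast (Nat.lt_two_pow_self).le.trans (Nat.pow_le_pow_right two_pos (by omega))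

lemma mem_cube_iff_mul_le (hd : 0 < d) {x y : EuclideanSpace ℝ (Fin d)} {r : ℝ} :
    y ∈ cube d x r ↔ ∀ i, √(d : ℝ) * |y i - x i| ≤ r := by
  have hsqrt : 0 < √(d : ℝ) := Real.sqrt_pos.2 (by exact_mod_cast hd)
  simp only [cube, mem_ofPred_eq, le_div_iff₀ hsqrt, mul_comm]

lemma cube_subset_closedBall (x : EuclideanSpace ℝ (Fin d)) {r : ℝ} (hr : 0 ≤ r) :
    cube d x r ⊆ closedBall x r := by
  intro y hy
  rw [mem_closedBall, EuclideanSpace.dist_eq, Real.sqrt_le_left hr]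
  calc ∑ i, dist (y i) (x i) ^ 2 ≤ ∑ _i : Fin d, (r / √(d : ℝ)) ^ 2 :=
        Finset.sum_le_sum fun i _ => by
          rw [Real.dist_eq]; exact pow_le_pow_left₀ (abs_nonneg _) (hy i) 2
    _ ≤ r ^ 2 := by
        rcases Nat.eq_zero_or_pos d with rfl | hd
        · simp [sq_nonneg]
        · rw [Finset.sum_const, Finset.card_univ, Fintype.card_fin, nsmul_eq_mul, div_pow,
            Real.sq_sqrt (Nat.cast_nonneg d), mul_div_cancel₀ _ (by positivity)]

lemma measurableSet_cube (x : EuclideanSpace ℝ (Fin d)) (r : ℝ) : MeasurableSet (cube d x r) := by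
  simp only [cube, ofPred_forall]
  exact (isClosed_iInter fun i => isClosed_le (by fun_prop) continuous_const).measurableSet

lemma box_eq_preimage_pi (b : EuclideanSpace ℝ (Fin d)) (s : ℝ) :
    box b s = WithLp.ofLp ⁻¹' univ.pi fun i => Ico (b i) (b i + s) := by
  ext y; simp [box]

def closedBox (b : EuclideanSpace ℝ (Fin d)) (s : ℝ) : Set (EuclideanSpace ℝ (Fin d)) :=
  {y | ∀ i, b i ≤ y i ∧ y i ≤ b i + s}

lemma closedBox_eq_preimage_Icc (b : EuclideanSpace ℝ (Fin d)) (s : ℝ) :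
    closedBox b s = WithLp.ofLp ⁻¹' Icc (fun i => b i) (fun i => b i + s) := by
  ext y; simp [closedBox, Pi.le_def, forall_and]

lemma box_subset_closedBox (b : EuclideanSpace ℝ (Fin d)) (s : ℝ) : box b s ⊆ closedBox b s :=
  fun _ hy i => ⟨(hy i).1, (hy i).2.le⟩

lemma isClosed_closedBox (b : EuclideanSpace ℝ (Fin d)) (s : ℝ) : IsClosed (closedBox b s) := by
  rw [closedBox_eq_preimage_Icc]
  exact isClosed_Icc.preimage (PiLp.continuous_ofLp 2 _)

lemma box_ae_eq_closedBox (b : EuclideanSpace ℝ (Fin d)) (s : ℝ) :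
    box b s =ᵐ[volume] closedBox b s := by
  rw [box_eq_preimage_pi, closedBox_eq_preimage_Icc]
  exact (PiLp.volume_preserving_ofLp (Fin d)).quasiMeasurePreserving.preimage_ae_eq
    Measure.univ_pi_Ico_ae_eq_Icc

lemma measurableSet_box (b : EuclideanSpace ℝ (Fin d)) (s : ℝ) : MeasurableSet (box b s) := by
  rw [box_eq_preimage_pi]
  exact WithLp.measurable_ofLp 2 _ (.univ_pi fun i => measurableSet_Ico)

lemma isBounded_box (b : EuclideanSpace ℝ (Fin d)) (s : ℝ) : Bornology.IsBounded (box b s) := by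
  refine ((isCompact_univ_pi fun i => isCompact_Icc (a := b i) (b := b i + s)).image
    (PiLp.continuous_toLp 2 _)).isBounded.subset fun y hy => ⟨y.ofLp, fun i _ => ?_, rfl⟩
  exact ⟨(hy i).1, (hy i).2.le⟩

lemma closedBall_subset_cube_of_abs_sub_le (hd : 0 < d) {x c : EuclideanSpace ℝ (Fin d)}
    {ρ δ R : ℝ} (hc : ∀ i, |x i - c i| ≤ δ) (hR : √(d : ℝ) * (ρ + δ) ≤ R) :
    closedBall x ρ ⊆ cube d c R := fun z hz => by
  rw [mem_cube_iff_mul_le hd]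
  refine fun i => le_trans ?_ hR
  gcongr
  calc |z i - c i| ≤ |z i - x i| + |x i - c i| := abs_sub_le _ _ _
    _ ≤ ρ + δ := add_le_add ((abs_apply_sub_le_dist z x i).trans (mem_closedBall.1 hz)) (hc i)

lemma abs_sub_le_of_mem_closedBox {b y z : EuclideanSpace ℝ (Fin d)} {s : ℝ}
    (hy : y ∈ closedBox b s) (hz : z ∈ closedBox b s) (i : Fin d) : |y i - z i| ≤ s := by
  rw [abs_le]; constructor <;> linarith [hy i, hz i]

def boxCenter (b : EuclideanSpace ℝ (Fin d)) (s : ℝ) : EuclideanSpace ℝ (Fin d) :=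
  WithLp.toLp 2 fun i => b i + s / 2

lemma closedBox_eq_cube (hd : 0 < d) (b : EuclideanSpace ℝ (Fin d)) (s : ℝ) :
    closedBox b s = cube d (boxCenter b s) (√(d : ℝ) * (s / 2)) := by
  have hsqrt : 0 < √(d : ℝ) := Real.sqrt_pos.2 (by exact_mod_cast hd)
  ext y
  simp only [closedBox, mem_cube_iff_mul_le hd, mul_le_mul_iff_right₀ hsqrt, abs_le,
    boxCenter, mem_ofPred_eq]
  refine forall_congr' fun i => ?_
  constructor <;> rintro ⟨h1, h2⟩ <;> constructor <;> linarith

lemma ball_boxCenter_subset_box (b : EuclideanSpace ℝ (Fin d)) (s : ℝ) :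
    ball (boxCenter b s) (s / 2) ⊆ box b s := fun y hy i => by
  have := abs_lt.1 ((abs_apply_sub_le_dist y _ i).trans_lt (mem_ball.1 hy))
  simp only [boxCenter, PiLp.toLp_apply] at this
  constructor <;> linarith

lemma boxCenter_mem_box (b : EuclideanSpace ℝ (Fin d)) {s : ℝ} (hs : 0 < s) :
    boxCenter b s ∈ box b s :=
  ball_boxCenter_subset_box b s (mem_ball_self (half_pos hs))

lemma volume_box_pos (b : EuclideanSpace ℝ (Fin d)) {s : ℝ} (hs : 0 < s) :
    0 < volume (box b s) :=
  (measure_ball_pos volume _ (half_pos hs)).trans_le (measure_mono (ball_boxCenter_subset_box b s))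

lemma interior_closedBox_nonempty (b : EuclideanSpace ℝ (Fin d)) {s : ℝ} (hs : 0 < s) :
    (interior (closedBox b s)).Nonempty :=
  ⟨boxCenter b s, (isOpen_ball.subset_interior_iff.2 ((ball_boxCenter_subset_box b s).trans
    (box_subset_closedBox b s))) (mem_ball_self (half_pos hs))⟩

lemma closedBox_subset_closedBall (hd : 0 < d) {b y : EuclideanSpace ℝ (Fin d)} {s : ℝ}
    (hs : 0 ≤ s) (hy : y ∈ closedBox b s) : closedBox b s ⊆ closedBall y (√(d : ℝ) * s) :=
  fun z hz => cube_subset_closedBall y (by positivity) <| (mem_cube_iff_mul_le hd).2 fun i =>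
    mul_le_mul_of_nonneg_left (abs_sub_le_of_mem_closedBox hz hy i) (Real.sqrt_nonneg _)

end Cubes

section Dyadic

variable {d : ℕ} (a : EuclideanSpace ℝ (Fin d)) (L : ℝ)

def dyadicCube (k : ℕ) (m : Fin d → ℕ) : Set (EuclideanSpace ℝ (Fin d)) :=
  box (WithLp.toLp 2 fun i => a i + m i * (L / 2 ^ k)) (L / 2 ^ k)

def dyadicIndex (k : ℕ) (y : EuclideanSpace ℝ (Fin d)) : Fin d → ℕ :=
  fun i => ⌊(y i - a i) / (L / 2 ^ k)⌋₊

lemma measurableSet_dyadicCube (k : ℕ) (m : Fin d → ℕ) : MeasurableSet (dyadicCube a L k m) :=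
  measurableSet_box _ _

lemma isDyadicSubcube_dyadicCube {k : ℕ} {m : Fin d → ℕ} (hm : ∀ i, m i < 2 ^ k) :
    IsDyadicSubcube a L (dyadicCube a L k m) :=
  ⟨k, m, hm, rfl⟩

lemma dyadicIndex_div_pow {j k : ℕ} (hjk : j ≤ k) (y : EuclideanSpace ℝ (Fin d)) :
    (fun i => dyadicIndex a L k y i / 2 ^ (k - j)) = dyadicIndex a L j y := by
  funext i
  obtain ⟨n, rfl⟩ := Nat.exists_eq_add_of_le hjk
  rw [dyadicIndex, dyadicIndex, ← Nat.floor_div_natCast, div_div, Nat.add_sub_cancel_left]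
  congr 2
  push_cast
  field_simp
  ring

variable {a L}

lemma mem_dyadicCube_iff (hL : 0 < L) {k : ℕ} {m : Fin d → ℕ} {y : EuclideanSpace ℝ (Fin d)}
    (hy : ∀ i, a i ≤ y i) : y ∈ dyadicCube a L k m ↔ dyadicIndex a L k y = m := by
  have hs : 0 < L / 2 ^ k := by positivity
  simp only [dyadicCube, box, mem_ofPred_eq, funext_iff, dyadicIndex]
  refine forall_congr' fun i => ?_
  rw [Nat.floor_eq_iff (div_nonneg (sub_nonneg.2 (hy i)) hs.le), le_div_iff₀ hs,
    div_lt_iff₀ hs]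
  constructor <;> rintro ⟨h1, h2⟩ <;> constructor <;> linarith

lemma mem_dyadicCube_dyadicIndex (hL : 0 < L) (k : ℕ) {y : EuclideanSpace ℝ (Fin d)}
    (hy : y ∈ box a L) : y ∈ dyadicCube a L k (dyadicIndex a L k y) :=
  (mem_dyadicCube_iff hL fun i => (hy i).1).2 rfl

lemma le_of_mem_dyadicCube (hL : 0 < L) {k : ℕ} {m : Fin d → ℕ} {y : EuclideanSpace ℝ (Fin d)}
    (hy : y ∈ dyadicCube a L k m) (i : Fin d) : a i ≤ y i := by
  have := (hy i).1
  nlinarith [show 0 ≤ (m i : ℝ) * (L / 2 ^ k) by positivity]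

lemma dyadicIndex_eq_of_mem (hL : 0 < L) {k : ℕ} {m : Fin d → ℕ} {y : EuclideanSpace ℝ (Fin d)}
    (hy : y ∈ dyadicCube a L k m) : dyadicIndex a L k y = m :=
  (mem_dyadicCube_iff hL (le_of_mem_dyadicCube hL hy)).1 hy

lemma dyadicCube_subset_of_le (hL : 0 < L) {j k : ℕ} (hjk : j ≤ k) (m : Fin d → ℕ) :
    dyadicCube a L k m ⊆ dyadicCube a L j fun i => m i / 2 ^ (k - j) := fun y hy => by
  rw [mem_dyadicCube_iff hL (le_of_mem_dyadicCube hL hy), ← dyadicIndex_div_pow a L hjk,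
    dyadicIndex_eq_of_mem hL hy]

lemma dyadicIndex_lt (hL : 0 < L) (k : ℕ) {y : EuclideanSpace ℝ (Fin d)} (hy : y ∈ box a L)
    (i : Fin d) : dyadicIndex a L k y i < 2 ^ k := by
  have hs : 0 < L / 2 ^ k := by positivity
  refine (Nat.floor_lt (div_nonneg (sub_nonneg.2 (hy i).1) hs.le)).2 ?_
  rw [div_lt_iff₀ hs, Nat.cast_pow, Nat.cast_ofNat, mul_div_cancel₀ _ (by positivity)]
  linarith [(hy i).2]

lemma dyadicCube_subset_box (hL : 0 < L) {k : ℕ} {m : Fin d → ℕ} (hm : ∀ i, m i < 2 ^ k) :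
    dyadicCube a L k m ⊆ box a L := fun y hy i => by
  have hs : 0 < L / 2 ^ k := by positivity
  have hmi : (m i : ℝ) + 1 ≤ 2 ^ k := by exact_mod_cast hm i
  have hL' : (2 : ℝ) ^ k * (L / 2 ^ k) = L := mul_div_cancel₀ _ (by positivity)
  have := hy i
  constructor
  · exact le_of_mem_dyadicCube hL hy i
  · nlinarith

lemma dyadicCube_zero {m : Fin d → ℕ} (hm : ∀ i, m i < 2 ^ 0) : dyadicCube a L 0 m = box a L := by
  obtain rfl : m = 0 := funext fun i => by simpa using hm i
  simp [dyadicCube]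

variable (a L) in
/-- `m i / 2 ^ (k - j)` is the position of the generation-`j` ancestor. -/
def IsStoppingCube (bad : Set (EuclideanSpace ℝ (Fin d)) → Prop) (k : ℕ) (m : Fin d → ℕ) :
    Prop :=
  (∀ i, m i < 2 ^ k) ∧ bad (dyadicCube a L k m) ∧
    ∀ j < k, ¬ bad (dyadicCube a L j fun i => m i / 2 ^ (k - j))

variable {bad : Set (EuclideanSpace ℝ (Fin d)) → Prop}

lemma IsStoppingCube.eq_of_le_of_not_disjoint (hL : 0 < L) {k k' : ℕ} {m m' : Fin d → ℕ}
    (h : IsStoppingCube a L bad k m) (h' : IsStoppingCube a L bad k' m') (hkk' : k ≤ k')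
    (hnd : ¬ Disjoint (dyadicCube a L k m) (dyadicCube a L k' m')) : k = k' ∧ m = m' := by
  obtain ⟨y, hy, hy'⟩ := not_disjoint_iff.1 hnd
  have hanc : (fun i => m' i / 2 ^ (k' - k)) = m :=
    (dyadicIndex_eq_of_mem hL (dyadicCube_subset_of_le hL hkk' m' hy')).symm.trans
      (dyadicIndex_eq_of_mem hL hy)
  obtain rfl | hlt := hkk'.eq_or_lt
  · simpa [eq_comm] using hanc
  · exact absurd (hanc ▸ h.2.1) (h'.2.2 k hlt)

lemma pairwise_disjoint_isStoppingCube (hL : 0 < L) :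
    Pairwise (Disjoint on fun p : {p : ℕ × (Fin d → ℕ) // IsStoppingCube a L bad p.1 p.2} =>
      dyadicCube a L p.1.1 p.1.2) := by
  intro p q hpq
  by_contra hnd
  rcases le_total p.1.1 q.1.1 with hle | hle
  · obtain ⟨hk, hm⟩ := p.2.eq_of_le_of_not_disjoint hL q.2 hle hnd
    exact hpq (Subtype.ext (Prod.ext hk hm))
  · obtain ⟨hk, hm⟩ := q.2.eq_of_le_of_not_disjoint hL p.2 hle fun h => hnd h.symm
    exact hpq (Subtype.ext (Prod.ext hk hm)).symm

lemma exists_isStoppingCube_of_bad (hL : 0 < L) {y : EuclideanSpace ℝ (Fin d)} (hy : y ∈ box a L)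
    {k : ℕ} (hk : bad (dyadicCube a L k (dyadicIndex a L k y))) :
    ∃ k m, IsStoppingCube a L bad k m ∧ y ∈ dyadicCube a L k m := by
  classical
  have hex : ∃ j, bad (dyadicCube a L j (dyadicIndex a L j y)) := ⟨k, hk⟩
  refine ⟨Nat.find hex, _, ⟨dyadicIndex_lt hL _ hy, Nat.find_spec hex, fun j hj => ?_⟩,
    mem_dyadicCube_dyadicIndex hL _ hy⟩
  rw [dyadicIndex_div_pow a L hj.le]
  exact Nat.find_min hex hj

lemma IsStoppingCube.exists_parent {k : ℕ} {m : Fin d → ℕ} (h : IsStoppingCube a L bad k m)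
    (hroot : ¬ bad (box a L)) :
    ∃ j, k = j + 1 ∧ ¬ bad (dyadicCube a L j fun i => m i / 2) := by
  obtain _ | j := k
  · exact absurd (dyadicCube_zero h.1 ▸ h.2.1) hroot
  · exact ⟨j, rfl, by simpa using h.2.2 j j.lt_succ_self⟩

end Dyadic

section Weight

variable {d : ℕ} {v : EuclideanSpace ℝ (Fin d) → ℝ} {Cv : ℝ} {s : Set (EuclideanSpace ℝ (Fin d))}

lemma _root_.IsWeight.integrableOn (hv : IsWeight v) (hs : Bornology.IsBounded s) :
    IntegrableOn v s :=
  (hv.1.integrableOn_isCompact hs.isCompact_closure).mono_set subset_closure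

lemma _root_.IsWeight.setIntegral_pos (hv : IsWeight v) (hb : Bornology.IsBounded s)
    (h0 : 0 < volume s) : 0 < ∫ y in s, v y := by
  rw [setIntegral_pos_iff_support_of_nonneg_ae (ae_restrict_of_ae (hv.2.mono fun _ h => h.le))
    (hv.integrableOn hb)]
  refine h0.trans_le (measure_mono_ae ?_)
  filter_upwards [hv.2] with y hy hys using ⟨hy.ne', hys⟩

lemma _root_.IsDoubling.setIntegral_cube_two_pow_mul_le (hdoub : IsDoubling v Cv) (hCv : 0 ≤ Cv)
    (x : EuclideanSpace ℝ (Fin d)) (K : ℕ) {r : ℝ} (hr : 0 < r) :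
    ∫ y in cube d x (2 ^ K * r), v y ≤ Cv ^ K * ∫ y in cube d x r, v y := by
  induction K with
  | zero => simp
  | succ K ih =>
    calc ∫ y in cube d x (2 ^ (K + 1) * r), v y
        = ∫ y in cube d x (2 * (2 ^ K * r)), v y := by rw [pow_succ, mul_comm _ 2, mul_assoc]
      _ ≤ Cv * ∫ y in cube d x (2 ^ K * r), v y := hdoub x _ (by positivity)
      _ ≤ Cv * (Cv ^ K * ∫ y in cube d x r, v y) := mul_le_mul_of_nonneg_left ih hCv
      _ = Cv ^ (K + 1) * ∫ y in cube d x r, v y := by ring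

lemma setIntegral_box_two_mul_le (hd : 0 < d) (hv : IsWeight v) (hCv : 0 ≤ Cv)
    (hdoub : IsDoubling v Cv) {b b' : EuclideanSpace ℝ (Fin d)} {s : ℝ} (hs : 0 < s)
    (hsub : box b s ⊆ box b' (2 * s)) :
    ∫ y in box b' (2 * s), v y ≤ Cv ^ 2 * ∫ y in box b s, v y := by
  have hc := hsub (boxCenter_mem_box b hs)
  have hparent : box b' (2 * s) ⊆ cube d (boxCenter b s) (2 ^ 2 * (√(d : ℝ) * (s / 2))) :=
    fun z hz => (mem_cube_iff_mul_le hd).2 fun i => by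
      have := abs_sub_le_of_mem_closedBox (box_subset_closedBox _ _ hz)
        (box_subset_closedBox _ _ hc) i
      nlinarith [Real.sqrt_nonneg (d : ℝ)]
  calc ∫ y in box b' (2 * s), v y
      ≤ ∫ y in cube d (boxCenter b s) (2 ^ 2 * (√(d : ℝ) * (s / 2))), v y :=
        setIntegral_mono_set (hv.integrableOn (isBounded_closedBall.subset
          (cube_subset_closedBall _ (by positivity))))
          (ae_restrict_of_ae (hv.2.mono fun _ h => h.le)) hparent.eventuallyLE
    _ ≤ Cv ^ 2 * ∫ y in cube d (boxCenter b s) (√(d : ℝ) * (s / 2)), v y :=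
        hdoub.setIntegral_cube_two_pow_mul_le hCv _ 2
          (mul_pos (Real.sqrt_pos.2 (by exact_mod_cast hd)) (half_pos hs))
    _ = Cv ^ 2 * ∫ y in box b s, v y := by
        rw [← closedBox_eq_cube hd, setIntegral_congr_set (box_ae_eq_closedBox b s)]

lemma _root_.IsWeight.withDensity_apply (hv : IsWeight v) (hs : MeasurableSet s)
    (hb : Bornology.IsBounded s) :
    volume.withDensity (fun y => ENNReal.ofReal (v y)) s = ENNReal.ofReal (∫ y in s, v y) :=
  withDensity_ofReal_apply hs (hv.integrableOn hb) (ae_restrict_of_ae (hv.2.mono fun _ h => h.le))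

lemma withDensity_cube_two_pow_mul_le (hv : IsWeight v) (hCv : 0 ≤ Cv) (hdoub : IsDoubling v Cv)
    (x : EuclideanSpace ℝ (Fin d)) (K : ℕ) {r : ℝ} (hr : 0 < r) :
    volume.withDensity (fun y => ENNReal.ofReal (v y)) (cube d x (2 ^ K * r)) ≤
      ENNReal.ofReal Cv ^ K * volume.withDensity (fun y => ENNReal.ofReal (v y)) (cube d x r) := by
  have hcube : ∀ ρ, 0 < ρ → volume.withDensity (fun y => ENNReal.ofReal (v y)) (cube d x ρ) =
      ENNReal.ofReal (∫ y in cube d x ρ, v y) := fun ρ hρ =>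
    hv.withDensity_apply (measurableSet_cube x ρ)
      (isBounded_closedBall.subset (cube_subset_closedBall x hρ.le))
  rw [hcube _ (by positivity), hcube _ hr, ← ENNReal.ofReal_pow hCv,
    ← ENNReal.ofReal_mul (pow_nonneg hCv K)]
  exact ENNReal.ofReal_le_ofReal (hdoub.setIntegral_cube_two_pow_mul_le hCv x K hr)

lemma withDensity_closedBall_three_mul_le (hd : 0 < d) (hv : IsWeight v) (hCv : 0 ≤ Cv)
    (hdoub : IsDoubling v Cv) (x : EuclideanSpace ℝ (Fin d)) {r : ℝ} (hr : 0 < r) :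
    volume.withDensity (fun y => ENNReal.ofReal (v y)) (closedBall x (3 * r)) ≤
      ENNReal.ofReal Cv ^ (d + 3) *
        volume.withDensity (fun y => ENNReal.ofReal (v y)) (closedBall x r) := by
  have hsub : closedBall x (3 * r) ⊆ cube d x (2 ^ (d + 3) * r) :=
    closedBall_subset_cube_of_abs_sub_le hd (δ := 0) (fun i => by simp) (by
      rw [pow_add, add_zero]
      nlinarith [sqrt_natCast_le_two_pow d, Real.sqrt_nonneg (d : ℝ)])
  calc _ ≤ _ := measure_mono hsub
    _ ≤ _ := withDensity_cube_two_pow_mul_le hv hCv hdoub x (d + 3) hr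
    _ ≤ _ := by gcongr; exact cube_subset_closedBall x hr.le

lemma withDensity_closedBall_le_closedBox (hd : 0 < d) (hv : IsWeight v) (hCv : 0 ≤ Cv)
    (hdoub : IsDoubling v Cv) {b y : EuclideanSpace ℝ (Fin d)} {s : ℝ} (hs : 0 < s)
    (hy : y ∈ closedBox b s) :
    volume.withDensity (fun y => ENNReal.ofReal (v y)) (closedBall y (3 * (√(d : ℝ) * s))) ≤
      ENNReal.ofReal Cv ^ (d + 3) *
        volume.withDensity (fun y => ENNReal.ofReal (v y)) (closedBox b s) := by
  have hq := sqrt_natCast_le_two_pow d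
  have hP : (1 : ℝ) ≤ 2 ^ d := one_le_pow₀ one_le_two
  have hsub : closedBall y (3 * (√(d : ℝ) * s)) ⊆
      cube d (boxCenter b s) (2 ^ (d + 3) * (√(d : ℝ) * (s / 2))) := by
    refine closedBall_subset_cube_of_abs_sub_le hd (δ := s / 2) (fun i => ?_) ?_
    · simp only [boxCenter, PiLp.toLp_apply, abs_le]
      constructor <;> linarith [hy i]
    · rw [pow_add]
      nlinarith [mul_le_mul_of_nonneg_right hq (by positivity : 0 ≤ 3 * √(d : ℝ) * s),
        mul_le_mul_of_nonneg_right hP (by positivity : 0 ≤ √(d : ℝ) * s / 2)]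
  rw [closedBox_eq_cube hd]
  exact (measure_mono hsub).trans (withDensity_cube_two_pow_mul_le hv hCv hdoub _ (d + 3)
    (mul_pos (Real.sqrt_pos.2 (by exact_mod_cast hd)) (half_pos hs)))

/-- The closed boxes, which differ from the half-open ones by a null set, are admissible for the
Vitali family of `v dx` by doubling. -/
theorem ae_tendsto_wavg_box (hd : 0 < d) (hv : IsWeight v) (hCv : 0 ≤ Cv)
    (hdoub : IsDoubling v Cv) {f : EuclideanSpace ℝ (Fin d) → ℝ}
    (hf : LocallyIntegrable (fun y => f y * v y)) :
    ∀ᵐ y, ∀ (b : ℕ → EuclideanSpace ℝ (Fin d)) (s : ℕ → ℝ), (∀ k, 0 < s k) →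
      (∀ k, y ∈ box (b k) (s k)) → Tendsto s atTop (𝓝 0) →
      Tendsto (fun k => wavg volume v f (box (b k) (s k))) atTop (𝓝 (f y)) := by
  set ν := volume.withDensity fun y => ENNReal.ofReal (v y)
  have hvm : AEMeasurable v := hv.1.aestronglyMeasurable.aemeasurable
  have hnn : 0 ≤ᵐ[volume] v := hv.2.mono fun _ h => h.le
  have := isLocallyFiniteMeasure_withDensity_ofReal hv.1
  have hfν : LocallyIntegrable f ν := (locallyIntegrable_iff (μ := ν)).2 fun K hK =>
    (integrableOn_withDensity_ofReal_iff hvm hnn hK.measurableSet).2 (hf.integrableOn_isCompact hK)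
  set C : ℝ≥0 := Cv.toNNReal ^ (d + 3)
  have hC : (C : ℝ≥0∞) = ENNReal.ofReal Cv ^ (d + 3) := by simp [C, ENNReal.ofReal]
  have hae := ae_tendsto_setAverage_of_doubling ν C
    (fun x r hr => hC ▸ withDensity_closedBall_three_mul_le hd hv hCv hdoub x hr) hfν
  filter_upwards [(ae_withDensity_iff' hvm.ennreal_ofReal).1 hae, hv.2] with y hy hvy b s hs hyb hs0
  have hyb' := fun k => box_subset_closedBox _ _ (hyb k)
  have hshrink : ∀ ε > 0, ∀ᶠ k in atTop, closedBox (b k) (s k) ⊆ closedBall y ε := fun ε hε => by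
    have hlim : Tendsto (fun k => √(d : ℝ) * s k) atTop (𝓝 0) := by
      simpa using hs0.const_mul √(d : ℝ)
    filter_upwards [hlim.eventually_le_const hε] with k hk
    exact (closedBox_subset_closedBall hd (hs k).le (hyb' k)).trans
      (closedBall_subset_closedBall hk)
  refine (hy (ENNReal.ofReal_pos.2 hvy).ne' _ (fun k => ⟨isClosed_closedBox _ _,
    interior_closedBox_nonempty _ (hs k), _, closedBox_subset_closedBall hd (hs k).le (hyb' k),
    hC ▸ withDensity_closedBall_le_closedBox hd hv hCv hdoub (hs k) (hyb' k)⟩) hshrink).congr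
    fun k => ?_
  rw [← setAverage_congr ((withDensity_absolutelyContinuous _ _).ae_eq
    (box_ae_eq_closedBox (b k) (s k))), setAverage_withDensity_ofReal hvm hnn
    (measurableSet_box _ _) (hv.integrableOn (isBounded_box _ _))]

end Weight

section Stopping

variable {d : ℕ} {a : EuclideanSpace ℝ (Fin d)} {L : ℝ} {v f : EuclideanSpace ℝ (Fin d) → ℝ}
  {Cv t : ℝ}

lemma _root_.IsDyadicSubcube.subset_box (hL : 0 < L) {P : Set (EuclideanSpace ℝ (Fin d))}
    (hP : IsDyadicSubcube a L P) : P ⊆ box a L := by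
  obtain ⟨k, m, hm, rfl⟩ := hP
  exact dyadicCube_subset_box hL hm

lemma _root_.IsDyadicSubcube.measurableSet {P : Set (EuclideanSpace ℝ (Fin d))}
    (hP : IsDyadicSubcube a L P) : MeasurableSet P := by
  obtain ⟨k, m, -, rfl⟩ := hP
  exact measurableSet_dyadicCube a L k m

lemma setIntegral_dyadicCube_pos (hL : 0 < L) (hv : IsWeight v) (k : ℕ) (m : Fin d → ℕ) :
    0 < ∫ y in dyadicCube a L k m, v y :=
  hv.setIntegral_pos (isBounded_box _ _) (volume_box_pos _ (by positivity))

lemma _root_.IsDyadicSubcube.setIntegral_weight_pos (hL : 0 < L) (hv : IsWeight v)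
    {P : Set (EuclideanSpace ℝ (Fin d))} (hP : IsDyadicSubcube a L P) : 0 < ∫ y in P, v y := by
  obtain ⟨k, m, -, rfl⟩ := hP
  exact setIntegral_dyadicCube_pos hL hv k m

lemma dyadicCube_succ_subset (hL : 0 < L) (k : ℕ) (m : Fin d → ℕ) :
    dyadicCube a L (k + 1) m ⊆ dyadicCube a L k fun i => m i / 2 := by
  simpa using dyadicCube_subset_of_le hL k.le_succ m

lemma setIntegral_dyadicCube_parent_le (hd : 0 < d) (hL : 0 < L) (hv : IsWeight v)
    (hCv : 0 ≤ Cv) (hdoub : IsDoubling v Cv) (k : ℕ) (m : Fin d → ℕ) :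
    ∫ y in dyadicCube a L k (fun i => m i / 2), v y ≤
      Cv ^ 2 * ∫ y in dyadicCube a L (k + 1) m, v y := by
  have hside : L / 2 ^ k = 2 * (L / 2 ^ (k + 1)) := by rw [pow_succ]; field_simp
  have hsub := dyadicCube_succ_subset (a := a) hL k m
  unfold dyadicCube at hsub ⊢
  rw [hside] at hsub ⊢
  exact setIntegral_box_two_mul_le hd hv hCv hdoub (by positivity) hsub

theorem ae_tendsto_wavg_dyadicCube (hd : 0 < d) (hL : 0 < L) (hv : IsWeight v) (hCv : 0 ≤ Cv)
    (hdoub : IsDoubling v Cv) (hf : IntegrableOn (fun y => f y * v y) (box a L)) :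
    ∀ᵐ y, y ∈ box a L → Tendsto (fun k => wavg volume v f (dyadicCube a L k
      (dyadicIndex a L k y))) atTop (𝓝 (f y)) := by
  have hF : LocallyIntegrable fun y => (box a L).indicator f y * v y := by
    simpa only [← indicator_mul_left] using
      (hf.integrable_indicator (measurableSet_box a L)).locallyIntegrable
  filter_upwards [ae_tendsto_wavg_box hd hv hCv hdoub hF] with y hy hyL
  have hlim := hy _ (fun k => L / 2 ^ k) (fun k => by positivity)
    (fun k => mem_dyadicCube_dyadicIndex hL k hyL)
    (tendsto_const_nhds.div_atTop (tendsto_pow_atTop_atTop_of_one_lt one_lt_two))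
  rw [indicator_of_mem hyL] at hlim
  refine hlim.congr fun k => ?_
  have hsub := dyadicCube_subset_box (a := a) hL (dyadicIndex_lt hL k hyL)
  simp only [wavg]
  congr 1
  exact setIntegral_congr_fun (measurableSet_box _ _) fun z hz => by
    rw [indicator_of_mem (hsub hz)]

variable (a L v f t) in
abbrev IsCZCube : ℕ → (Fin d → ℕ) → Prop :=
  IsStoppingCube a L fun Q => t < wavg volume v (fun y => |f y|) Q

lemma IsStoppingCube.wavg_le (hd : 0 < d) (hL : 0 < L) (hv : IsWeight v) (hCv : 0 ≤ Cv)
    (hdoub : IsDoubling v Cv) (hf : IntegrableOn (fun y => |f y| * v y) (box a L))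
    (hroot : wavg volume v (fun y => |f y|) (box a L) ≤ t) {k : ℕ} {m : Fin d → ℕ}
    (h : IsCZCube a L v f t k m) :
    wavg volume v (fun y => |f y|) (dyadicCube a L k m) ≤ Cv ^ 2 * t := by
  obtain ⟨j, rfl, hparent⟩ := IsStoppingCube.exists_parent h (not_lt.2 hroot)
  have hm : ∀ i, m i / 2 < 2 ^ j := fun i =>
    (Nat.div_lt_iff_lt_mul two_pos).2 (by simpa [pow_succ] using h.1 i)
  calc wavg volume v (fun y => |f y|) (dyadicCube a L (j + 1) m)
      ≤ Cv ^ 2 * wavg volume v (fun y => |f y|) (dyadicCube a L j fun i => m i / 2) :=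
        wavg_le_mul_wavg_of_subset (dyadicCube_succ_subset hL j m)
          (hf.mono_set (dyadicCube_subset_box hL hm))
          (ae_restrict_of_ae (hv.2.mono fun _ h => h.le)) (ae_of_all _ fun _ => abs_nonneg _)
          (setIntegral_dyadicCube_pos hL hv _ _) (setIntegral_dyadicCube_pos hL hv _ _).ne'
          (setIntegral_dyadicCube_parent_le hd hL hv hCv hdoub j m)
    _ ≤ Cv ^ 2 * t := mul_le_mul_of_nonneg_left (not_lt.1 hparent) (sq_nonneg Cv)

lemma ae_abs_le_of_notMem_isCZCube (hd : 0 < d) (hL : 0 < L) (hv : IsWeight v) (hCv : 0 ≤ Cv)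
    (hdoub : IsDoubling v Cv) (hf : IntegrableOn (fun y => |f y| * v y) (box a L)) :
    ∀ᵐ y ∂volume.restrict (box a L \ ⋃ p : {p : ℕ × (Fin d → ℕ) // IsCZCube a L v f t p.1 p.2},
      dyadicCube a L p.1.1 p.1.2), |f y| ≤ t := by
  rw [ae_restrict_iff'
    ((measurableSet_box a L).diff (.iUnion fun _ => measurableSet_dyadicCube _ _ _ _))]
  filter_upwards [ae_tendsto_wavg_dyadicCube hd hL hv hCv hdoub hf] with y hy ⟨hyL, hyP⟩
  refine le_of_tendsto (hy hyL) (.of_forall fun k => not_lt.1 fun hbad => hyP ?_)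
  obtain ⟨k, m, hkm, hyk⟩ :=
    exists_isStoppingCube_of_bad (bad := fun Q => t < wavg volume v (fun y => |f y|) Q) hL hyL hbad
  exact mem_iUnion.2 ⟨⟨(k, m), hkm⟩, hyk⟩

lemma abs_le_of_wavg_box_lt_of_dim_zero {a : EuclideanSpace ℝ (Fin 0)}
    {v f : EuclideanSpace ℝ (Fin 0) → ℝ} (hL : 0 < L) (hv : IsWeight v)
    (ht : wavg volume v (fun y => |f y|) (box a L) < t) (y : EuclideanSpace ℝ (Fin 0)) :
    |f y| ≤ t := by
  have hvpos := hv.setIntegral_pos (isBounded_box a L) (volume_box_pos a hL)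
  have hbox : box a L = univ := eq_univ_of_forall fun y i => i.elim0
  rw [hbox, Measure.restrict_univ] at hvpos
  rw [hbox, wavg_univ_of_subsingleton hvpos.ne' y] at ht
  exact ht.le

theorem exists_stoppingCubes (hL : 0 < L) (hv : IsWeight v) (hCv : 0 ≤ Cv) (hdoub : IsDoubling v Cv)
    (hf : IntegrableOn (fun y => f y * v y) (box a L))
    (ht : wavg volume v (fun y => |f y|) (box a L) < t) :
    ∃ (ι : Type) (_ : Countable ι) (P : ι → Set (EuclideanSpace ℝ (Fin d))),
      (∀ i, IsDyadicSubcube a L (P i)) ∧ Pairwise (Disjoint on P) ∧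
      (∀ i, t < wavg volume v (fun y => |f y|) (P i) ∧
        wavg volume v (fun y => |f y|) (P i) ≤ Cv ^ 2 * t) ∧
      ∀ᵐ y ∂volume.restrict (box a L \ ⋃ i, P i), |f y| ≤ t := by
  rcases Nat.eq_zero_or_pos d with rfl | hd
  · exact ⟨Empty, inferInstance, Empty.elim, Empty.rec, fun i => i.elim, Empty.rec,
      ae_of_all _ (abs_le_of_wavg_box_lt_of_dim_zero hL hv ht)⟩
  have hfabs : IntegrableOn (fun y => |f y| * v y) (box a L) :=
    hf.abs.congr (ae_restrict_of_ae (hv.2.mono fun y hy => by simp [abs_mul, abs_of_pos hy]))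
  exact ⟨{p : ℕ × (Fin d → ℕ) // IsCZCube a L v f t p.1 p.2}, inferInstance,
    fun p => dyadicCube a L p.1.1 p.1.2, fun p => isDyadicSubcube_dyadicCube a L p.2.1,
    pairwise_disjoint_isStoppingCube hL,
    fun p => ⟨p.2.2.1, p.2.wavg_le hd hL hv hCv hdoub hfabs ht.le⟩,
    ae_abs_le_of_notMem_isCZCube hd hL hv hCv hdoub hfabs⟩

end Stopping

end CalderonZygmund

open CalderonZygmund

/-- Calderón–Zygmund decomposition of `f` on a cube `R` with respect
to a doubling weight `v` at height `t > (1/v(R))∫_R |f| v`. -/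
theorem calderon_zygmund_decomposition {d : ℕ}
    (a : EuclideanSpace ℝ (Fin d)) (L : ℝ) (hL : 0 < L)
    (v : EuclideanSpace ℝ (Fin d) → ℝ) (hv : IsWeight v)
    (Cv : ℝ) (hCv : 0 < Cv) (hdoub : IsDoubling v Cv) :
    ∃ C > 0, ∃ γ > 1,
      ∀ f : EuclideanSpace ℝ (Fin d) → ℝ,
        IntegrableOn (fun y => f y * v y) (box a L) volume →
        ∀ t : ℝ,
          ((∫ y in box a L, v y)⁻¹ * ∫ y in box a L, |f y| * v y) < t →
          ∃ (ι : Type) (_ : Countable ι) (P : ι → Set (EuclideanSpace ℝ (Fin d)))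
            (g : EuclideanSpace ℝ (Fin d) → ℝ)
            (h : ι → EuclideanSpace ℝ (Fin d) → ℝ),
            (∀ i, IsDyadicSubcube a L (P i)) ∧
            (∀ i j, i ≠ j → Disjoint (P i) (P j)) ∧
            (∀ᵐ y ∂(volume.restrict (box a L)), f y = g y + ∑' i, h i y) ∧
            (∀ᵐ y ∂(volume.restrict (box a L)), |g y| ≤ C * t) ∧
            (∀ i, ∀ y, y ∉ P i → h i y = 0) ∧
            (∀ i, (∫ y in P i, h i y * v y) = 0) ∧
            (∀ i, t ≤ (∫ y in P i, v y)⁻¹ * ∫ y in P i, |f y| * v y ∧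
              (∫ y in P i, v y)⁻¹ * (∫ y in P i, |f y| * v y) ≤ γ * t) ∧
            (∀ᵐ y ∂(volume.restrict (box a L \ ⋃ i, P i)), |f y| ≤ t) := by
  refine ⟨Cv ^ 2 + 1, by positivity, Cv ^ 2 + 1, lt_add_of_pos_left 1 (pow_pos hCv 2),
    fun f hf t ht => ?_⟩
  obtain ⟨ι, hι, P, hdyadic, hdisj, havg, hgood⟩ := exists_stoppingCubes hL hv hCv.le hdoub hf ht
  have ht0 : 0 ≤ t := (wavg_nonneg (ae_restrict_of_ae (hv.2.mono fun _ h => h.le))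
    (ae_of_all _ fun _ => abs_nonneg _)).trans ht.le
  have hCt : Cv ^ 2 * t ≤ (Cv ^ 2 + 1) * t := by nlinarith
  have hPbox := fun i => (hdyadic i).subset_box hL
  obtain ⟨g, h, hfgh, hg, hsupp, hmean⟩ := exists_good_bad_decomposition
    (measurableSet_box a L) (fun i => (hdyadic i).measurableSet) hdisj
    (hv.2.mono fun _ h => h.le) (fun i => ((hdyadic i).setIntegral_weight_pos hL hv).ne')
    (fun i => hv.integrableOn ((isBounded_box a L).subset (hPbox i)))
    (fun i => hf.mono_set (hPbox i)) (fun i => (havg i).2.trans hCt)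
    (hgood.mono fun y hy => hy.trans (by nlinarith))
  exact ⟨ι, hι, P, g, h, hdyadic, fun i j hij => hdisj hij, ae_of_all _ hfgh, hg, hsupp, hmean,
    fun i => ⟨(havg i).1.le, (havg i).2.trans hCt⟩, hgood⟩

end
end
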